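/- Let d ≥ 1 and 0 < m ≤ M₂. Let H : [0,∞) → ℝ^{d×d} be a continuous family of symmetric matrices with (m/M₂)·I_d ≼ H(t) ≼ I_d for all t ≥ 0. Suppose Q, P : [0,∞) → ℝ^{d×d} are differentiable and satisfy Q′(t) = P(t) and P′(t) = −H(t)Q(t) − 2P(t) for all t ≥ 0, with initial condition (Q(0), P(0)) = (I_d, 0) or (Q(0), P(0)) = (0, I_d). Then for all t ≥ 0, 2Q(t)ᵀQ(t) + Q(t)ᵀP(t) + P(t)ᵀQ(t) + P(t)ᵀP(t) ≼ 2·e^{−mt/M₂}·I_d. -/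

import Mathlib

open Matrix

private lemma dotSelf_nonneg {d : ℕ} (x : Fin d → ℝ) : 0 ≤ x ⬝ᵥ x :=
  Finset.sum_nonneg fun i _ => mul_self_nonneg (x i)

private lemma dot_symm {d : ℕ} {A : Matrix (Fin d) (Fin d) ℝ} (hA : Aᵀ = A) (x y : Fin d → ℝ) :
    x ⬝ᵥ (A *ᵥ y) = y ⬝ᵥ (A *ᵥ x) := by
  rw [Matrix.dotProduct_mulVec, dotProduct_comm, ← Matrix.mulVec_transpose, hA]

private lemma quad_sub_smul_one {d : ℕ} (A : Matrix (Fin d) (Fin d) ℝ) (c : ℝ) (x : Fin d → ℝ) :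
    x ⬝ᵥ ((A - c • (1 : Matrix (Fin d) (Fin d) ℝ)) *ᵥ x) = x ⬝ᵥ (A *ᵥ x) - c * (x ⬝ᵥ x) := by
  rw [Matrix.sub_mulVec, dotProduct_sub, Matrix.smul_mulVec, Matrix.one_mulVec,
    dotProduct_smul, smul_eq_mul]

private lemma hasDerivAt_dot {d : ℕ} {a b : ℝ → Fin d → ℝ} {a' b' : Fin d → ℝ} {s : ℝ}
    (ha : ∀ i, HasDerivAt (fun u => a u i) (a' i) s)
    (hb : ∀ i, HasDerivAt (fun u => b u i) (b' i) s) :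
    HasDerivAt (fun u => a u ⬝ᵥ b u) (a' ⬝ᵥ b s + a s ⬝ᵥ b') s := by
  have h := HasDerivAt.fun_sum (fun i (_ : i ∈ Finset.univ) => (ha i).mul (hb i))
  simpa [dotProduct, Finset.sum_add_distrib] using h

theorem stmt_1 (d : ℕ) (hd : 1 ≤ d) (m M₂ : ℝ) (hm : 0 < m) (hmM : m ≤ M₂)
    (H : ℝ → Matrix (Fin d) (Fin d) ℝ)
    (hHcont : ∀ i j, ContinuousOn (fun t => H t i j) (Set.Ici 0))
    (hHsymm : ∀ t, 0 ≤ t → (H t).IsSymm)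
    (hHlow : ∀ t, 0 ≤ t → (H t - (m / M₂) • (1 : Matrix (Fin d) (Fin d) ℝ)).PosSemidef)
    (hHup : ∀ t, 0 ≤ t → ((1 : Matrix (Fin d) (Fin d) ℝ) - H t).PosSemidef)
    (Q P : ℝ → Matrix (Fin d) (Fin d) ℝ)
    (hQ : ∀ t, 0 ≤ t → ∀ i j, HasDerivAt (fun s => Q s i j) (P t i j) t)
    (hP : ∀ t, 0 ≤ t → ∀ i j,
      HasDerivAt (fun s => P s i j) ((-(H t * Q t) - (2 : ℝ) • P t) i j) t)
    (hinit : (Q 0 = 1 ∧ P 0 = 0) ∨ (Q 0 = 0 ∧ P 0 = 1)) :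
    ∀ t, 0 ≤ t →
      ((2 * Real.exp (-(m * t) / M₂)) • (1 : Matrix (Fin d) (Fin d) ℝ) -
        ((2 : ℝ) • ((Q t)ᵀ * Q t) + (Q t)ᵀ * P t + (P t)ᵀ * Q t + (P t)ᵀ * P t)).PosSemidef := by
  intro t ht
  have hM₂ : 0 < M₂ := lt_of_lt_of_le hm hmM
  set lam : ℝ := m / M₂ with hlamdef
  have hlam0 : 0 < lam := div_pos hm hM₂
  have hlam1 : lam ≤ 1 := (div_le_one hM₂).mpr hmM
  -- the key quadratic-form bound for each vector v
  have key : ∀ v : Fin d → ℝ,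
      (2:ℝ) * ((Q t *ᵥ v) ⬝ᵥ (Q t *ᵥ v)) + 2 * ((Q t *ᵥ v) ⬝ᵥ (P t *ᵥ v))
        + (P t *ᵥ v) ⬝ᵥ (P t *ᵥ v) ≤ 2 * Real.exp (-(lam * t)) * (v ⬝ᵥ v) := by
    intro v
    set q : ℝ → Fin d → ℝ := fun s => Q s *ᵥ v with hqdef
    set p : ℝ → Fin d → ℝ := fun s => P s *ᵥ v with hpdef
    have hq' : ∀ s, 0 ≤ s → ∀ i, HasDerivAt (fun u => q u i) (p s i) s := by
      intro s hs i
      have h := HasDerivAt.fun_sum (fun j (_ : j ∈ Finset.univ) => (hQ s hs i j).mul_const (v j))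
      simpa [hqdef, hpdef, Matrix.mulVec, dotProduct] using h
    have hp' : ∀ s, 0 ≤ s → ∀ i,
        HasDerivAt (fun u => p u i) ((-(H s *ᵥ q s) - (2:ℝ) • p s) i) s := by
      intro s hs i
      have h := HasDerivAt.fun_sum (fun j (_ : j ∈ Finset.univ) => (hP s hs i j).mul_const (v j))
      have e1 : (-(H s *ᵥ q s) - (2:ℝ) • p s) i
          = ∑ j, (-(H s * Q s) - (2:ℝ) • P s) i j * v j := by
        have e0 : (-(H s *ᵥ q s) - (2:ℝ) • p s) i
            = ((-(H s * Q s) - (2:ℝ) • P s) *ᵥ v) i := by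
          simp [hqdef, hpdef, Matrix.sub_mulVec, Matrix.neg_mulVec, Matrix.mulVec_mulVec,
            Matrix.smul_mulVec]
        rw [e0]
        simp [Matrix.mulVec, dotProduct]
      rw [e1]
      have e2 : (fun u => p u i) = fun u => ∑ j, P u i j * v j := by
        funext u; simp [hpdef, Matrix.mulVec, dotProduct]
      rw [e2]
      exact h
    set f : ℝ → ℝ := fun s => 2 * (q s ⬝ᵥ q s) + 2 * (q s ⬝ᵥ p s) + p s ⬝ᵥ p s with hfdef
    set D : ℝ → ℝ := fun s =>
      -2 * (q s ⬝ᵥ (H s *ᵥ q s)) - 2 * (p s ⬝ᵥ (H s *ᵥ q s)) - 2 * (p s ⬝ᵥ p s) with hDdef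
    have hf' : ∀ s, 0 ≤ s → HasDerivAt f (D s) s := by
      intro s hs
      have h1 := hasDerivAt_dot (hq' s hs) (hq' s hs)
      have h2 := hasDerivAt_dot (hq' s hs) (hp' s hs)
      have h3 := hasDerivAt_dot (hp' s hs) (hp' s hs)
      have h := ((h1.const_mul (2:ℝ)).add (h2.const_mul (2:ℝ))).add h3
      have heq : D s
          = 2 * (p s ⬝ᵥ q s + q s ⬝ᵥ p s)
            + 2 * (p s ⬝ᵥ p s + q s ⬝ᵥ (-(H s *ᵥ q s) - (2:ℝ) • p s))
            + ((-(H s *ᵥ q s) - (2:ℝ) • p s) ⬝ᵥ p s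
              + p s ⬝ᵥ (-(H s *ᵥ q s) - (2:ℝ) • p s)) := by
        simp only [hDdef, sub_dotProduct, dotProduct_sub, neg_dotProduct,
          dotProduct_neg, smul_dotProduct, dotProduct_smul, smul_eq_mul,
          dotProduct_comm (p s) (q s), dotProduct_comm (H s *ᵥ q s) (p s)]
        ring
      rw [heq]
      exact h
    -- the differential inequality : lam * f s + D s ≤ 0 for s ≥ 0
    have hkey : ∀ s, 0 ≤ s → lam * f s + D s ≤ 0 := by
      intro s hs
      have hsymmS : (H s)ᵀ = H s := hHsymm s hs
      have hgg : q s ⬝ᵥ (H s *ᵥ p s) = p s ⬝ᵥ (H s *ᵥ q s) := dot_symm hsymmS _ _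
      set a := q s ⬝ᵥ q s with hadef
      set b := q s ⬝ᵥ p s with hbdef
      set c := p s ⬝ᵥ p s with hcdef
      set e := q s ⬝ᵥ (H s *ᵥ q s) with hedef
      set g := p s ⬝ᵥ (H s *ᵥ q s) with hgdef
      set k := p s ⬝ᵥ (H s *ᵥ p s) with hkdef
      have F1 : 0 ≤ e - lam * a := by
        have h := (Matrix.posSemidef_iff_dotProduct_mulVec.mp (hHlow s hs)).2 (q s)
        rw [show star (q s) = q s from rfl, quad_sub_smul_one] at h
        exact h
      have F2 : 0 ≤ (e + 2 * g + k) - lam * (a + 2 * b + c) := by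
        have h := (Matrix.posSemidef_iff_dotProduct_mulVec.mp (hHlow s hs)).2 (q s + p s)
        rw [show star (q s + p s) = q s + p s from rfl, quad_sub_smul_one] at h
        have e1 : (q s + p s) ⬝ᵥ (H s *ᵥ (q s + p s)) = e + 2 * g + k := by
          rw [Matrix.mulVec_add, dotProduct_add, add_dotProduct,
            add_dotProduct, hgg]
          ring
        have e2 : (q s + p s) ⬝ᵥ (q s + p s) = a + 2 * b + c := by
          rw [dotProduct_add, add_dotProduct, add_dotProduct,
            dotProduct_comm (p s) (q s)]
          ring
        rw [e1, e2] at h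
        exact h
      have F3 : 0 ≤ c - k := by
        have h := (Matrix.posSemidef_iff_dotProduct_mulVec.mp (hHup s hs)).2 (p s)
        rw [show star (p s) = p s from rfl] at h
        rw [Matrix.sub_mulVec, dotProduct_sub, Matrix.one_mulVec] at h
        exact h
      have hc : 0 ≤ c := dotSelf_nonneg (p s)
      have F4 : 0 ≤ c - lam * c := by nlinarith
      have F5 : 0 ≤ lam * c := mul_nonneg hlam0.le hc
      have hfs : f s = 2 * a + 2 * b + c := rfl
      have hDs : D s = -2 * e - 2 * g - 2 * c := rfl
      rw [hfs, hDs]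
      linarith
    -- Gronwall: g s := exp (lam * s) * f s is antitone on [0, t]
    set G : ℝ → ℝ := fun s => Real.exp (lam * s) * f s with hGdef
    have hG' : ∀ s, 0 ≤ s →
        HasDerivAt G (Real.exp (lam * s) * (lam * 1) * f s + Real.exp (lam * s) * D s) s := by
      intro s hs
      exact (((hasDerivAt_id s).const_mul lam).exp).mul (hf' s hs)
    have hanti : AntitoneOn G (Set.Icc 0 t) := by
      apply antitoneOn_of_deriv_nonpos (convex_Icc 0 t)
      · exact fun x hx => ((hG' x hx.1).continuousAt).continuousWithinAt
      · intro x hx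
        rw [interior_Icc] at hx
        exact ((hG' x hx.1.le).differentiableAt).differentiableWithinAt
      · intro x hx
        rw [interior_Icc] at hx
        rw [(hG' x hx.1.le).deriv]
        have h1 := hkey x hx.1.le
        have h2 := Real.exp_nonneg (lam * x)
        have h3 := mul_le_mul_of_nonneg_left h1 h2
        nlinarith [Real.exp_pos (lam * x)]
    have hGt : G t ≤ G 0 := hanti (Set.mem_Icc.mpr ⟨le_refl 0, ht⟩)
      (Set.mem_Icc.mpr ⟨ht, le_refl t⟩) ht
    have hG0 : G 0 ≤ 2 * (v ⬝ᵥ v) := by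
      have hvv : 0 ≤ v ⬝ᵥ v := dotSelf_nonneg v
      rcases hinit with ⟨hQ0, hP0⟩ | ⟨hQ0, hP0⟩ <;>
        simp [hGdef, hfdef, hqdef, hpdef, hQ0, hP0, Matrix.one_mulVec, Matrix.zero_mulVec,
          dotProduct_zero, zero_dotProduct] <;>
        linarith
    have hft : Real.exp (lam * t) * f t ≤ 2 * (v ⬝ᵥ v) := le_trans hGt hG0
    have hE : (0:ℝ) < Real.exp (lam * t) := Real.exp_pos _
    have : f t ≤ 2 * (v ⬝ᵥ v) * Real.exp (-(lam * t)) := by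
      rw [Real.exp_neg, ← div_eq_mul_inv, le_div_iff₀ hE]
      linarith [hft]
    calc (2:ℝ) * ((Q t *ᵥ v) ⬝ᵥ (Q t *ᵥ v)) + 2 * ((Q t *ᵥ v) ⬝ᵥ (P t *ᵥ v))
          + (P t *ᵥ v) ⬝ᵥ (P t *ᵥ v) = f t := rfl
      _ ≤ 2 * (v ⬝ᵥ v) * Real.exp (-(lam * t)) := this
      _ = 2 * Real.exp (-(lam * t)) * (v ⬝ᵥ v) := by ring
  -- now assemble the PosSemidef statement
  have hexp : -(m * t) / M₂ = -(lam * t) := by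
    rw [hlamdef]; ring
  refine Matrix.posSemidef_iff_dotProduct_mulVec.mpr ?_
  constructor
  · -- Hermitian
    have hsym : ((2 * Real.exp (-(m * t) / M₂)) • (1 : Matrix (Fin d) (Fin d) ℝ) -
        ((2 : ℝ) • ((Q t)ᵀ * Q t) + (Q t)ᵀ * P t + (P t)ᵀ * Q t + (P t)ᵀ * P t))ᵀ
        = (2 * Real.exp (-(m * t) / M₂)) • (1 : Matrix (Fin d) (Fin d) ℝ) -
        ((2 : ℝ) • ((Q t)ᵀ * Q t) + (Q t)ᵀ * P t + (P t)ᵀ * Q t + (P t)ᵀ * P t) := by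
      simp only [Matrix.transpose_sub, Matrix.transpose_smul, Matrix.transpose_one,
        Matrix.transpose_add, Matrix.transpose_mul, Matrix.transpose_transpose]
      abel
    rw [Matrix.IsHermitian]
    rw [show ∀ M : Matrix (Fin d) (Fin d) ℝ, Mᴴ = Mᵀ from fun M => rfl]
    exact hsym
  · intro x
    rw [show star x = x from rfl]
    have hx1 : x ⬝ᵥ (((Q t)ᵀ * Q t) *ᵥ x) = (Q t *ᵥ x) ⬝ᵥ (Q t *ᵥ x) := by
      rw [← Matrix.mulVec_mulVec, Matrix.dotProduct_mulVec, Matrix.vecMul_transpose]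
    have hx2 : x ⬝ᵥ (((Q t)ᵀ * P t) *ᵥ x) = (Q t *ᵥ x) ⬝ᵥ (P t *ᵥ x) := by
      rw [← Matrix.mulVec_mulVec, Matrix.dotProduct_mulVec, Matrix.vecMul_transpose]
    have hx3 : x ⬝ᵥ (((P t)ᵀ * Q t) *ᵥ x) = (P t *ᵥ x) ⬝ᵥ (Q t *ᵥ x) := by
      rw [← Matrix.mulVec_mulVec, Matrix.dotProduct_mulVec, Matrix.vecMul_transpose]
    have hx4 : x ⬝ᵥ (((P t)ᵀ * P t) *ᵥ x) = (P t *ᵥ x) ⬝ᵥ (P t *ᵥ x) := by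
      rw [← Matrix.mulVec_mulVec, Matrix.dotProduct_mulVec, Matrix.vecMul_transpose]
    have hcomm : (P t *ᵥ x) ⬝ᵥ (Q t *ᵥ x) = (Q t *ᵥ x) ⬝ᵥ (P t *ᵥ x) :=
      dotProduct_comm _ _
    have expand : x ⬝ᵥ (((2 * Real.exp (-(m * t) / M₂)) • (1 : Matrix (Fin d) (Fin d) ℝ) -
        ((2 : ℝ) • ((Q t)ᵀ * Q t) + (Q t)ᵀ * P t + (P t)ᵀ * Q t + (P t)ᵀ * P t)) *ᵥ x)
        = 2 * Real.exp (-(m * t) / M₂) * (x ⬝ᵥ x)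
          - (2 * ((Q t *ᵥ x) ⬝ᵥ (Q t *ᵥ x)) + 2 * ((Q t *ᵥ x) ⬝ᵥ (P t *ᵥ x))
            + (P t *ᵥ x) ⬝ᵥ (P t *ᵥ x)) := by
      rw [Matrix.sub_mulVec, dotProduct_sub, Matrix.smul_mulVec,
        Matrix.one_mulVec, dotProduct_smul, smul_eq_mul]
      rw [Matrix.add_mulVec, Matrix.add_mulVec, Matrix.add_mulVec, Matrix.smul_mulVec]
      rw [dotProduct_add, dotProduct_add, dotProduct_add,
        dotProduct_smul, smul_eq_mul]
      rw [hx1, hx2, hx3, hx4, hcomm]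
      ring
    rw [expand, hexp]
    have := key x
    linarith
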